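/- arXiv:1804.06588 — 4 statements merged into one kernel-verified Lean document; each statement's English description precedes it below -/
import Mathlib

section
/- Let M be a 3-connected matroid and let X and Y be 3-separating subsets of the ground set E of M. If |X ∩ Y| ≥ 2, then X ∪ Y is 3-separating; and if |E − (X ∪ Y)| ≥ 2, then X ∩ Y is 3-separating. -/
open Set Matroid

namespace NDP

variable {α : Type*}

/-- The rank of a set in a matroid: the supremum of sizes of independent subsets. -/
noncomputable def rk (M : Matroid α) (X : Set α) : ℕ :=
  sSup {n | ∃ I, M.Indep I ∧ I ⊆ X ∧ I.ncard = n}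

/-- A circuit: a minimal dependent subset of the ground set. -/
def Circuit (M : Matroid α) (C : Set α) : Prop :=
  C ⊆ M.E ∧ ¬ M.Indep C ∧ ∀ x ∈ C, M.Indep (C \ {x})

/-- A cocircuit: a circuit of the dual matroid. -/
def Cocircuit (M : Matroid α) (C : Set α) : Prop := Circuit M✶ C

/-- Deletion of a set of elements. -/
def delete (M : Matroid α) (D : Set α) : Matroid α := M ↾ (M.E \ D)

/-- Contraction of a set of elements. -/
def contract (M : Matroid α) (C : Set α) : Matroid α := (delete M✶ C)✶

/-- The connectivity function `λ_M(X) = r(X) + r(E − X) − r(M)`. -/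
noncomputable def lambda (M : Matroid α) (X : Set α) : ℤ :=
  (rk M X : ℤ) + (rk M (M.E \ X) : ℤ) - (rk M M.E : ℤ)

/-- `S` gives a `k`-separation `(S, E − S)` of `M`. -/
def IsKSeparation (M : Matroid α) (k : ℕ) (S : Set α) : Prop :=
  S ⊆ M.E ∧ lambda M S ≤ (k : ℤ) - 1 ∧ k ≤ S.ncard ∧ k ≤ (M.E \ S).ncard

/-- A matroid is connected (2-connected) if it has no 1-separation. -/
def Connected (M : Matroid α) : Prop := ∀ S, ¬ IsKSeparation M 1 S

/-- A matroid is 3-connected if it has no `k`-separation for `k < 3`. -/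
def ThreeConnected (M : Matroid α) : Prop := ∀ k < 3, ∀ S, ¬ IsKSeparation M k S

/-- Isomorphism of two matroids on the same type. -/
def Iso (M N : Matroid α) : Prop :=
  ∃ e : M.E ≃ N.E,
    ∀ I : Set M.E, M.Indep (Subtype.val '' I) ↔ N.Indep (Subtype.val '' (e '' I))

/-- `N` is a minor of `M`. -/
def IsMinor (N M : Matroid α) : Prop :=
  ∃ C D : Set α, C ⊆ M.E ∧ D ⊆ M.E ∧ Disjoint C D ∧ N = delete (contract M C) D

/-- `M` has a minor isomorphic to `N`. -/
def HasMinorIso (M N : Matroid α) : Prop := ∃ M', IsMinor M' M ∧ Iso M' N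

/-- `N` is a simplification of `M`: the restriction of `M` to a set of representatives,
one from each parallel class of nonloop elements. -/
def IsSimplification (M N : Matroid α) : Prop :=
  ∃ X ⊆ M.E, N = M ↾ X ∧
    (∀ e ∈ X, M.Indep {e}) ∧
    (∀ e f, e ∈ X → f ∈ X → e ∈ M.closure {f} → e = f) ∧
    (∀ e ∈ M.E, M.Indep {e} → ∃ f ∈ X, e ∈ M.closure {f})

/-- `si M` is 3-connected. -/
def SiThreeConnected (M : Matroid α) : Prop :=
  ∀ N, IsSimplification M N → ThreeConnected N

/-- `co M` is 3-connected; the cosimplification is the dual of the simplification of the dual. -/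
def CoThreeConnected (M : Matroid α) : Prop :=
  ∀ N, IsSimplification M✶ N → ThreeConnected N✶

end NDP


section Aux

open Set Matroid

namespace NDP

variable {α : Type*} {M : Matroid α} [M.Finite] {I X Y : Set α}

lemma indep_finite (hI : M.Indep I) : I.Finite :=
  M.ground_finite.subset hI.subset_ground

lemma rk_eq_of_basis' (hI : M.IsBasis' I X) : rk M X = I.ncard := by
  refine IsGreatest.csSup_eq ⟨⟨I, hI.indep, hI.subset, rfl⟩, ?_⟩
  rintro n ⟨J, hJ, hJX, rfl⟩
  by_contra h
  push_neg at h
  have hlt : I.encard < J.encard := by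
    rw [← (indep_finite hI.indep).cast_ncard_eq, ← (indep_finite hJ).cast_ncard_eq]
    exact_mod_cast h
  obtain ⟨e, he, hei⟩ := hI.indep.augment hJ hlt
  exact hI.insert_not_indep ⟨hJX he.1, he.2⟩ hei

lemma ncard_le_rk (hI : M.Indep I) (hIX : I ⊆ X) : I.ncard ≤ rk M X := by
  obtain ⟨J, hJ⟩ := M.exists_isBasis' X
  rw [rk_eq_of_basis' hJ]
  by_contra h
  push_neg at h
  have hlt : J.encard < I.encard := by
    rw [← (indep_finite hI).cast_ncard_eq, ← (indep_finite hJ.indep).cast_ncard_eq]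
    exact_mod_cast h
  obtain ⟨e, he, hei⟩ := hJ.indep.augment hI hlt
  exact hJ.insert_not_indep ⟨hIX he.1, he.2⟩ hei

lemma rk_mono (h : X ⊆ Y) : rk M X ≤ rk M Y := by
  obtain ⟨I, hI⟩ := M.exists_isBasis' X
  rw [rk_eq_of_basis' hI]
  exact ncard_le_rk hI.indep (hI.subset.trans h)

lemma rk_le_ncard (hX : X.Finite) : rk M X ≤ X.ncard := by
  obtain ⟨I, hI⟩ := M.exists_isBasis' X
  rw [rk_eq_of_basis' hI]
  exact ncard_le_ncard hI.subset hX

lemma rk_submod (X Y : Set α) : rk M (X ∪ Y) + rk M (X ∩ Y) ≤ rk M X + rk M Y := by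
  obtain ⟨I, hI⟩ := M.exists_isBasis' (X ∩ Y)
  obtain ⟨J, hJ, hIJ⟩ := hI.indep.subset_isBasis'_of_subset
    (hI.subset.trans (inter_subset_left.trans subset_union_left))
  rw [rk_eq_of_basis' hI, rk_eq_of_basis' hJ]
  have hJfin := indep_finite hJ.indep
  have h1 : (J ∩ X).ncard + (J ∩ Y).ncard = J.ncard + (J ∩ X ∩ Y).ncard := by
    rw [← ncard_union_add_ncard_inter _ _ (hJfin.inter_of_left X) (hJfin.inter_of_left Y)]
    have hu : J ∩ X ∪ J ∩ Y = J := by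
      rw [← inter_union_distrib_left, inter_eq_self_of_subset_left hJ.subset]
    have hi : J ∩ X ∩ (J ∩ Y) = J ∩ X ∩ Y := by
      ext x; simp [and_assoc]; tauto
    rw [hu, hi]
  have h2 : (J ∩ X).ncard ≤ rk M X :=
    ncard_le_rk (hJ.indep.subset inter_subset_left) inter_subset_right
  have h3 : (J ∩ Y).ncard ≤ rk M Y :=
    ncard_le_rk (hJ.indep.subset inter_subset_left) inter_subset_right
  have h4 : I.ncard ≤ (J ∩ X ∩ Y).ncard :=
    ncard_le_ncard (fun x hx => ⟨⟨hIJ hx, (hI.subset hx).1⟩, (hI.subset hx).2⟩)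
      ((hJfin.inter_of_left X).inter_of_left Y)
  omega

lemma lambda_submod (X Y : Set α) :
    lambda M (X ∪ Y) + lambda M (X ∩ Y) ≤ lambda M X + lambda M Y := by
  have h1 := rk_submod (M := M) X Y
  have h2 := rk_submod (M := M) (M.E \ X) (M.E \ Y)
  have e1 : (M.E \ X) ∪ (M.E \ Y) = M.E \ (X ∩ Y) := by ext x; simp; tauto
  have e2 : (M.E \ X) ∩ (M.E \ Y) = M.E \ (X ∪ Y) := by ext x; simp; tauto
  rw [e1, e2] at h2
  simp only [lambda]
  omega

end NDP

end Aux

/-- Uncrossing: unions and intersections of 3-separating sets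
are 3-separating, under the stated cardinality conditions. -/
theorem statement_2 {α : Type*} (M : Matroid α) [M.Finite] (hM : NDP.ThreeConnected M)
    (X Y : Set α) (hX : X ⊆ M.E) (hY : Y ⊆ M.E)
    (hX3 : NDP.lambda M X ≤ 2) (hY3 : NDP.lambda M Y ≤ 2) :
    (2 ≤ (X ∩ Y).ncard → NDP.lambda M (X ∪ Y) ≤ 2) ∧
    (2 ≤ (M.E \ (X ∪ Y)).ncard → NDP.lambda M (X ∩ Y) ≤ 2) := by
  have hEfin := M.ground_finite
  have hsub := NDP.lambda_submod (M := M) X Y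
  constructor
  · intro h2
    by_cases hc : 2 ≤ (M.E \ (X ∩ Y)).ncard
    · have hnot := hM 2 (by norm_num) (X ∩ Y)
      have hge : (2 : ℤ) ≤ NDP.lambda M (X ∩ Y) := by
        by_contra hle
        push_neg at hle
        exact hnot ⟨inter_subset_left.trans hX, by omega, h2, hc⟩
      linarith
    · push_neg at hc
      have ha : NDP.rk M (X ∪ Y) ≤ NDP.rk M M.E := NDP.rk_mono (union_subset hX hY)
      have hb : NDP.rk M (M.E \ (X ∪ Y)) ≤ (M.E \ (X ∩ Y)).ncard :=
        le_trans (NDP.rk_le_ncard (hEfin.diff))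
          (ncard_le_ncard (diff_subset_diff_right (inter_subset_left.trans subset_union_left))
            (hEfin.diff))
      simp only [NDP.lambda]
      omega
  · intro h2
    by_cases hc : 2 ≤ (X ∪ Y).ncard
    · have hnot := hM 2 (by norm_num) (X ∪ Y)
      have hge : (2 : ℤ) ≤ NDP.lambda M (X ∪ Y) := by
        by_contra hle
        push_neg at hle
        exact hnot ⟨union_subset hX hY, by omega, hc, h2⟩
      linarith
    · push_neg at hc
      have ha : NDP.rk M (M.E \ (X ∩ Y)) ≤ NDP.rk M M.E := NDP.rk_mono diff_subset
      have hb : NDP.rk M (X ∩ Y) ≤ (X ∪ Y).ncard :=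
        le_trans (NDP.rk_le_ncard ((hEfin.subset hX).inter_of_left _))
          (ncard_le_ncard (inter_subset_left.trans subset_union_left)
            (hEfin.subset (union_subset hX hY)))
      simp only [NDP.lambda]
      omega
end

section
/- Let M be a 3-connected matroid, let (X, E−X) be a 3-separation of M, and let e ∈ E − X. Then e is not in both the closure of X and the coclosure of X; that is, e ∉ cl(X) ∩ cl*(X). -/
open Set Matroid

section Aux

variable {α : Type*} {M : Matroid α} {I J X A : Set α} {e : α}

/-- For a finite matroid, `NDP.rk` of a set equals the cardinality of any basis' of it. -/
lemma NDP.rk_eq_ncard_of_basis' [M.Finite] (hI : M.IsBasis' I X) : NDP.rk M X = I.ncard := by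
  have hub : ∀ n ∈ {n | ∃ J, M.Indep J ∧ J ⊆ X ∧ J.ncard = n}, n ≤ I.ncard := by
    rintro n ⟨J, hJ, hJX, rfl⟩
    obtain ⟨J', hJ', hJJ'⟩ := hJ.subset_isBasis'_of_subset hJX
    have hfin : J'.Finite := M.set_finite J' hJ'.indep.subset_ground
    have h1 : J.ncard ≤ J'.ncard := Set.ncard_le_ncard hJJ' hfin
    have h2 : J'.ncard = I.ncard := by
      rw [Set.ncard_def, hJ'.encard_eq_encard hI, ← Set.ncard_def]
    omega
  exact le_antisymm (csSup_le ⟨I.ncard, I, hI.indep, hI.subset, rfl⟩ hub)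
    (le_csSup ⟨I.ncard, hub⟩ ⟨I, hI.indep, hI.subset, rfl⟩)

lemma NDP.rk_insert_of_mem_closure [M.Finite] (hX : X ⊆ M.E) (he : e ∈ M.closure X) :
    NDP.rk M (insert e X) = NDP.rk M X := by
  obtain ⟨I, hI⟩ := M.exists_isBasis X hX
  have hIe : M.IsBasis I (insert e X) :=
    hI.indep.isBasis_of_subset_of_subset_closure (hI.subset.trans (Set.subset_insert _ _))
      (Set.insert_subset (hI.closure_eq_closure ▸ he) hI.subset_closure)
  rw [NDP.rk_eq_ncard_of_basis' hIe.isBasis', NDP.rk_eq_ncard_of_basis' hI.isBasis']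

/-- Rank duality: `r*(A) + r(E) = |A| + r(E \ A)`. -/
lemma NDP.rk_dual_add [M.Finite] (hA : A ⊆ M.E) :
    NDP.rk M✶ A + NDP.rk M M.E = A.ncard + NDP.rk M (M.E \ A) := by
  obtain ⟨I, hI⟩ := M.exists_isBasis (M.E \ A) Set.diff_subset
  obtain ⟨B, hB, hIB⟩ := hI.indep.subset_isBasis_of_subset hI.indep.subset_ground
  have hBbase : M.IsBase B := Matroid.isBasis_ground_iff.mp hB
  have hIeq : I = B ∩ (M.E \ A) :=
    hI.eq_of_subset_indep (hBbase.indep.inter_right _)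
      (Set.subset_inter hIB hI.subset) Set.inter_subset_right
  have hBX : M.IsBasis (B ∩ (M.E \ A)) (M.E \ A) := hIeq ▸ hI
  have hdual := hBbase.compl_inter_isBasis_of_inter_isBasis hBX
  rw [Set.diff_diff_cancel_left hA] at hdual
  have hAB : (M.E \ B) ∩ A = A \ B := Set.ext fun x => by
    simp only [Set.mem_inter_iff, Set.mem_diff]
    exact ⟨fun ⟨⟨_, h⟩, ha⟩ => ⟨ha, h⟩, fun ⟨ha, h⟩ => ⟨⟨hA ha, h⟩, ha⟩⟩
  rw [hAB] at hdual
  have hEfin : M.E.Finite := M.ground_finite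
  have hAfin : A.Finite := hEfin.subset hA
  have hBfin : B.Finite := hEfin.subset hBbase.subset_ground
  rw [NDP.rk_eq_ncard_of_basis' hdual.isBasis', NDP.rk_eq_ncard_of_basis' hB.isBasis',
    NDP.rk_eq_ncard_of_basis' hI.isBasis', hIeq]
  -- arithmetic : |A \ B| + |B| = |A| + |B ∩ (E \ A)|
  have h1 : (A \ (A ∩ B)).ncard + (A ∩ B).ncard = A.ncard :=
    Set.ncard_diff_add_ncard_of_subset Set.inter_subset_left hAfin
  have h2 : (B \ (A ∩ B)).ncard + (A ∩ B).ncard = B.ncard :=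
    Set.ncard_diff_add_ncard_of_subset Set.inter_subset_right hBfin
  have e1 : A \ (A ∩ B) = A \ B := by rw [Set.diff_self_inter]
  have e2 : B \ (A ∩ B) = B ∩ (M.E \ A) := by
    rw [Set.inter_comm A B, Set.diff_self_inter]
    exact Set.ext fun x => by
      simp only [Set.mem_inter_iff, Set.mem_diff]
      exact ⟨fun ⟨hb, h⟩ => ⟨hb, hBbase.subset_ground hb, h⟩, fun ⟨hb, _, h⟩ => ⟨hb, h⟩⟩
  rw [e1] at h1; rw [e2] at h2
  omega

end Aux

/-- For a 3-separation `(X, E − X)` of a 3-connected matroid and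
`e ∈ E − X`, `e` is not in both `cl(X)` and `cl*(X)`. -/
theorem statement_4 {α : Type*} (M : Matroid α) [M.Finite] (hM : NDP.ThreeConnected M)
    (X : Set α) (hX : X ⊆ M.E) (hsep : NDP.lambda M X ≤ 2)
    (hXcard : 3 ≤ X.ncard) (hcocard : 3 ≤ (M.E \ X).ncard)
    (e : α) (he : e ∈ M.E \ X) :
    e ∉ M.closure X ∩ M✶.closure X := by
  rintro ⟨hecl, hecl'⟩
  obtain ⟨heE, heX⟩ := he
  have hEfin : M.E.Finite := M.ground_finite
  have hXfin : X.Finite := hEfin.subset hX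
  set Z : Set α := insert e X with hZ
  have hZE : Z ⊆ M.E := Set.insert_subset heE hX
  have hX' : X ⊆ M✶.E := by rwa [Matroid.dual_ground]
  have h1 : NDP.rk M Z = NDP.rk M X := NDP.rk_insert_of_mem_closure hX hecl
  have h2 : NDP.rk M✶ Z = NDP.rk M✶ X := NDP.rk_insert_of_mem_closure hX' hecl'
  have h3 := NDP.rk_dual_add hX
  have h4 := NDP.rk_dual_add hZE
  have h5 : Z.ncard = X.ncard + 1 := Set.ncard_insert_of_notMem heX hXfin
  have hdiff : M.E \ Z = (M.E \ X) \ {e} := by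
    rw [hZ, Set.diff_diff, Set.union_comm, ← Set.insert_eq]
  have h6 : NDP.rk M (M.E \ X) = NDP.rk M (M.E \ Z) + 1 := by omega
  have hcard2 : ((M.E \ X) \ {e}).ncard + 1 = (M.E \ X).ncard :=
    Set.ncard_diff_singleton_add_one ⟨heE, heX⟩ (hEfin.subset Set.diff_subset)
  have hZcard : 2 ≤ Z.ncard := by omega
  have hZcocard : 2 ≤ (M.E \ Z).ncard := by rw [hdiff]; omega
  refine hM 2 (by norm_num) Z ⟨hZE, ?_, hZcard, hZcocard⟩
  have hsep' := hsep
  unfold NDP.lambda at hsep' ⊢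
  push_cast
  omega
end

section
/- Let M be a matroid, and suppose P ⊆ E(M) contains no triangle of M and admits a partition (L_1, ..., L_t) into pairs, for some t ≥ 3, such that L_i ∪ L_j is a cocircuit for all distinct i, j ∈ {1,...,t} except possibly {i,j} = {1,2}. If a triangle T of M meets some L_i, then L_i ⊆ T. -/
open Set Matroid

/-!
Suppose `L i = {x, z}` with `x ∈ T` and `z ∉ T`, and pick two further indices `j, k` such that
`L i ∪ L k` is a cocircuit. Orthogonality with `L i ∪ L k` puts an element `c` of `T` in `L k`.
Either `L i ∪ L j` is a cocircuit, and orthogonality puts a second element of `T` in `L j`, or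
`{i, j}` is the exceptional pair, so `L j ∪ L k` is a cocircuit and orthogonality at `c` puts a
second element of `T` in `L j ∪ L k`. Thus `T` consists of `x` and two elements of
`L j ∪ L k`, so it is a triangle inside `P`.
-/

namespace NDP

variable {α : Type*} {M : Matroid α} {C : Set α}

lemma circuit_iff_isCircuit : Circuit M C ↔ M.IsCircuit C := by
  rw [isCircuit_iff_dep_forall_sdiff_singleton_indep, dep_iff, Circuit]
  tauto

lemma cocircuit_iff_isCocircuit : Cocircuit M C ↔ M.IsCocircuit C :=
  circuit_iff_isCircuit

end NDP

section

variable {α ι : Type*}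

lemma Matroid.IsCircuit.inter_nonempty_of_isCocircuit_union {M : Matroid α} {T A B : Set α}
    {x : α} (hT : M.IsCircuit T) (hAB : M.IsCocircuit (A ∪ B)) (hxT : x ∈ T) (hxA : x ∈ A)
    (hTA : T ∩ A ⊆ {x}) : (T ∩ B).Nonempty := by
  obtain ⟨y, ⟨hyT, hyAB⟩, hyx⟩ :=
    (hT.isCocircuit_inter_nontrivial hAB ⟨x, hxT, .inl hxA⟩).exists_ne x
  exact ⟨y, hyT, hyAB.resolve_left fun hyA ↦ hyx (hTA ⟨hyT, hyA⟩)⟩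

lemma Set.subset_of_subset_inter_of_ncard_le {A B S : Set α} (hA : A.Finite) (hS : S ⊆ A ∩ B)
    (hcard : A.ncard ≤ S.ncard) : A ⊆ B :=
  eq_of_subset_of_ncard_le (hS.trans inter_subset_left) hcard hA ▸ hS.trans inter_subset_right

lemma Set.inter_subset_singleton_of_ncard_eq_two {T L : Set α} {x : α} (hL : L.ncard = 2)
    (hxT : x ∈ T) (hxL : x ∈ L) (hLT : ¬ L ⊆ T) : T ∩ L ⊆ {x} := by
  rintro y ⟨hyT, hyL⟩
  by_contra hyx
  refine hLT (subset_of_subset_inter_of_ncard_le (finite_of_ncard_ne_zero (by omega)) ?_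
    (hL.trans (ncard_pair (Ne.symm hyx)).symm).le)
  exact pair_subset ⟨hxL, hxT⟩ ⟨hyL, hyT⟩

lemma Set.subset_of_ncard_eq_three {T P : Set α} {x y z : α} (hT : T.ncard = 3) (hxy : x ≠ y)
    (hxz : x ≠ z) (hyz : y ≠ z) (hx : x ∈ T ∩ P) (hy : y ∈ T ∩ P) (hz : z ∈ T ∩ P) : T ⊆ P :=
  subset_of_subset_inter_of_ncard_le (finite_of_ncard_ne_zero (by omega))
    (insert_subset hx (pair_subset hy hz))
    (by rw [hT, ncard_eq_three.mpr ⟨x, y, z, hxy, hxz, hyz, rfl⟩])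

lemma exists_two_ne_of_three_le_card [Fintype ι] (hι : 3 ≤ Fintype.card ι) (i : ι) (p : Set ι) :
    ∃ j k, i ≠ j ∧ i ≠ k ∧ j ≠ k ∧ ({i, k} : Set ι) ≠ p := by
  classical
  have hcard : 1 < (Finset.univ.erase i).card := by
    rw [Finset.card_erase_of_mem (Finset.mem_univ i), Finset.card_univ]
    omega
  obtain ⟨j, hj, k, hk, hjk⟩ := Finset.one_lt_card.mp hcard
  rw [Finset.mem_erase] at hj hk
  by_cases hikp : ({i, k} : Set ι) = p
  · refine ⟨k, j, hk.1.symm, hj.1.symm, hjk.symm, hikp ▸ ?_⟩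
    rw [Ne, pair_eq_pair_iff]
    tauto
  · exact ⟨j, k, hj.1.symm, hk.1.symm, hjk, hikp⟩

end

/-- If `P` contains no triangle and is partitioned into pairs `L_1, ..., L_t`
(`t ≥ 3`) with `L_i ∪ L_j` a cocircuit for all distinct `i, j` except possibly
`{i,j} = {1,2}`, then any triangle meeting some `L_i` contains `L_i`. -/
theorem statement_7 {α : Type*} (M : Matroid α) (P : Set α)
    (t : ℕ) (ht : 3 ≤ t) (L : Fin t → Set α)
    (hunion : ⋃ i, L i = P)
    (hdisj : ∀ i j, i ≠ j → Disjoint (L i) (L j))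
    (hpair : ∀ i, (L i).ncard = 2)
    (hcc : ∀ i j : Fin t, i ≠ j →
      ({i, j} : Set (Fin t)) ≠ {(⟨0, by omega⟩ : Fin t), (⟨1, by omega⟩ : Fin t)} →
      NDP.Cocircuit M (L i ∪ L j))
    (hnotri : ¬ ∃ T ⊆ P, NDP.Circuit M T ∧ T.ncard = 3)
    (T : Set α) (hT : NDP.Circuit M T) (hT3 : T.ncard = 3)
    (i : Fin t) (hmeet : (T ∩ L i).Nonempty) :
    L i ⊆ T := by
  obtain ⟨x, hxT, hxL⟩ := hmeet
  by_contra hLT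
  have hTL : T ∩ L i ⊆ {x} := inter_subset_singleton_of_ncard_eq_two (hpair i) hxT hxL hLT
  have hTc : M.IsCircuit T := NDP.circuit_iff_isCircuit.mp hT
  set p : Set (Fin t) := {⟨0, by omega⟩, ⟨1, by omega⟩}
  have hcoc : ∀ a b, a ≠ b → {a, b} ≠ p → M.IsCocircuit (L a ∪ L b) :=
    fun a b hab habp ↦ NDP.cocircuit_iff_isCocircuit.mp (hcc a b hab habp)
  obtain ⟨j, k, hij, hik, hjk, hikp⟩ := exists_two_ne_of_three_le_card (by simpa) i p
  obtain ⟨c, hcT, hcL⟩ := hTc.inter_nonempty_of_isCocircuit_union (hcoc i k hik hikp) hxT hxL hTL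
  obtain ⟨d, hdT, hdc, hdL⟩ : ∃ d ∈ T, d ≠ c ∧ d ∈ L j ∪ L k := by
    by_cases hijp : {i, j} = p
    · have hjkp : {j, k} ≠ p := by
        rw [← hijp, Ne, pair_eq_pair_iff]
        tauto
      obtain ⟨d, ⟨hdT, hdL⟩, hdc⟩ :=
        (hTc.isCocircuit_inter_nontrivial (hcoc j k hjk hjkp) ⟨c, hcT, .inr hcL⟩).exists_ne c
      exact ⟨d, hdT, hdc, hdL⟩
    · obtain ⟨d, hdT, hdL⟩ :=
        hTc.inter_nonempty_of_isCocircuit_union (hcoc i j hij hijp) hxT hxL hTL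
      exact ⟨d, hdT, (hdisj j k hjk).ne_of_mem hdL hcL, .inl hdL⟩
  have hLjk : Disjoint (L i) (L j ∪ L k) := disjoint_union_right.2 ⟨hdisj i j hij, hdisj i k hik⟩
  have hLP : ∀ a, L a ⊆ P := fun a ↦ hunion ▸ subset_iUnion L a
  refine hnotri ⟨T, subset_of_ncard_eq_three hT3 (hLjk.ne_of_mem hxL (.inr hcL))
    (hLjk.ne_of_mem hxL hdL) hdc.symm ⟨hxT, hLP i hxL⟩ ⟨hcT, hLP k hcL⟩
    ⟨hdT, union_subset (hLP j) (hLP k) hdL⟩, hT, hT3⟩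
end

section
/- Let M be a 3-connected matroid and C* a rank-3 cocircuit of M. If x ∈ C* has the property that cl(C*) − {x} contains a triangle of M/x, then the simplification of M/x is 3-connected. -/
open Set Matroid

namespace NDPProof

open NDP

variable {α : Type*} {M : Matroid α} {X Y I J S P Q : Set α} {e f x : α}

lemma indep_finite (hE : M.E.Finite) (hI : M.Indep I) : I.Finite :=
  hE.subset hI.subset_ground

lemma rk_bddAbove (hE : M.E.Finite) (X : Set α) :
    BddAbove {n | ∃ I, M.Indep I ∧ I ⊆ X ∧ I.ncard = n} := by
  refine ⟨M.E.ncard, ?_⟩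
  rintro n ⟨I, hI, -, rfl⟩
  exact Set.ncard_le_ncard hI.subset_ground hE

lemma basis'_ncard (hE : M.E.Finite) (hI : M.IsBasis' I X) : rk M X = I.ncard := by
  have hub : ∀ n ∈ {n | ∃ J, M.Indep J ∧ J ⊆ X ∧ J.ncard = n}, n ≤ I.ncard := by
    rintro n ⟨J, hJ, hJX, rfl⟩
    obtain ⟨J', hJ', hJJ'⟩ := hJ.subset_isBasis'_of_subset hJX
    have hcard : J'.ncard = I.ncard := by
      have := hJ'.encard_eq_encard hI
      rw [Set.ncard_def, Set.ncard_def, this]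
    calc J.ncard ≤ J'.ncard := Set.ncard_le_ncard hJJ' (indep_finite hE hJ'.indep)
      _ = I.ncard := hcard
  refine le_antisymm (csSup_le ⟨I.ncard, I, hI.indep, hI.subset, rfl⟩ hub) ?_
  exact le_csSup ⟨I.ncard, hub⟩ ⟨I, hI.indep, hI.subset, rfl⟩

lemma exists_basis'_rk (hE : M.E.Finite) (X : Set α) :
    ∃ I, M.IsBasis' I X ∧ I.ncard = rk M X := by
  obtain ⟨I, hI⟩ := M.exists_isBasis' X
  exact ⟨I, hI, (basis'_ncard hE hI).symm⟩

lemma indep_ncard_le_rk (hE : M.E.Finite) (hI : M.Indep I) (hIX : I ⊆ X) :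
    I.ncard ≤ rk M X :=
  le_csSup (rk_bddAbove hE X) ⟨I, hI, hIX, rfl⟩

lemma rk_mono (hE : M.E.Finite) (hXY : X ⊆ Y) : rk M X ≤ rk M Y := by
  obtain ⟨I, hI, hcard⟩ := exists_basis'_rk hE X
  rw [← hcard]
  exact indep_ncard_le_rk hE hI.indep (hI.subset.trans hXY)

lemma indep_rk (hE : M.E.Finite) (hI : M.Indep I) : rk M I = I.ncard := by
  have : M.IsBasis' I I := ⟨⟨hI, subset_rfl⟩, fun J hJ _ => hJ.2⟩
  exact basis'_ncard hE this

lemma rk_le_ncard (hE : M.E.Finite) (hX : X.Finite) : rk M X ≤ X.ncard := by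
  refine csSup_le ⟨0, ∅, M.empty_indep, empty_subset _, by simp⟩ ?_
  rintro n ⟨J, hJ, hJX, rfl⟩
  exact Set.ncard_le_ncard hJX hX

lemma rk_closure (hE : M.E.Finite) (X : Set α) :
    rk M (M.closure X) = rk M X := by
  obtain ⟨I, hI, hcard⟩ := exists_basis'_rk hE X
  rw [← hcard, basis'_ncard hE hI.isBasis_closure_right.isBasis']

lemma rk_le_of_subset_closure (hE : M.E.Finite) (hYX : Y ⊆ M.closure X) :
    rk M Y ≤ rk M X := by
  rw [← rk_closure hE X]
  exact rk_mono hE hYX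

lemma rk_union_le (hE : M.E.Finite) (X Y : Set α) :
    rk M (X ∪ Y) ≤ rk M X + rk M Y := by
  obtain ⟨K, hK, hcard⟩ := exists_basis'_rk hE (X ∪ Y)
  rw [← hcard]
  have hKfin := indep_finite hE hK.indep
  have h1 : K = (K ∩ X) ∪ (K ∩ Y) := by
    rw [← Set.inter_union_distrib_left, Set.inter_eq_self_of_subset_left hK.subset]
  calc K.ncard ≤ (K ∩ X).ncard + (K ∩ Y).ncard := by
        nth_rewrite 1 [h1]; exact Set.ncard_union_le _ _
    _ ≤ rk M X + rk M Y :=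
        Nat.add_le_add
          (indep_ncard_le_rk hE (hK.indep.subset inter_subset_left) inter_subset_right)
          (indep_ncard_le_rk hE (hK.indep.subset inter_subset_left) inter_subset_right)

lemma rk_superadd (hE : M.E.Finite) (hS : S ⊆ M.E) :
    rk M M.E ≤ rk M S + rk M (M.E \ S) := by
  obtain ⟨I, hI, hcard⟩ := exists_basis'_rk hE S
  obtain ⟨J, hJ, hIJ⟩ := hI.indep.subset_isBasis'_of_subset hI.indep.subset_ground
  have hJfin := indep_finite hE hJ.indep
  have hJS : J ∩ S = I := by
    refine subset_antisymm (hI.2 ⟨hJ.indep.subset inter_subset_left, inter_subset_right⟩ ?_) ?_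
    · exact subset_inter hIJ hI.subset
    · exact subset_inter hIJ hI.subset
  have h2 : rk M M.E = J.ncard := basis'_ncard hE hJ
  have h3 : J.ncard = (J ∩ S).ncard + (J \ S).ncard := by
    rw [Set.ncard_inter_add_ncard_diff_eq_ncard J S hJfin]
  rw [h2, h3, hJS, hcard]
  exact Nat.add_le_add le_rfl
    (indep_ncard_le_rk hE (hJ.indep.subset diff_subset)
      (diff_subset_diff_left hJ.indep.subset_ground))

lemma rk_insert_le (hE : M.E.Finite) (hYE : Y ⊆ M.E) (e : α) :
    rk M (insert e Y) ≤ rk M Y + 1 := by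
  have h := rk_union_le hE {e} Y
  have h1 : rk M {e} ≤ 1 := by
    simpa using rk_le_ncard (M := M) hE (Set.finite_singleton e)
  rw [Set.singleton_union] at h
  omega

lemma mem_closure_iff_rk (hE : M.E.Finite) (hYE : Y ⊆ M.E) (heE : e ∈ M.E) :
    e ∈ M.closure Y ↔ rk M (insert e Y) = rk M Y := by
  obtain ⟨I, hI, hcard⟩ := exists_basis'_rk hE Y
  have hclI : M.closure Y = M.closure I := hI.closure_eq_closure.symm
  constructor
  · intro he
    refine le_antisymm ?_ (rk_mono hE (subset_insert _ _))
    refine rk_le_of_subset_closure hE (insert_subset he (M.subset_closure Y hYE))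
  · intro hrk
    by_contra hne
    have heY : e ∉ Y := fun h => hne (M.mem_closure_of_mem h hYE)
    have heI : e ∉ I := fun h => heY (hI.subset h)
    have hins : M.Indep (insert e I) := by
      rw [hI.indep.insert_indep_iff_of_notMem heI]
      exact ⟨heE, fun h => hne (hclI ▸ h)⟩
    have hle := indep_ncard_le_rk hE hins
      (insert_subset_insert hI.subset)
    rw [Set.ncard_insert_of_notMem heI (indep_finite hE hI.indep)] at hle
    omega

lemma rk_insert_of_not_mem_closure (hE : M.E.Finite) (hYE : Y ⊆ M.E) (heE : e ∈ M.E)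
    (he : e ∉ M.closure Y) : rk M (insert e Y) = rk M Y + 1 := by
  have h1 := rk_insert_le hE hYE e
  have h2 := rk_mono (M := M) hE (subset_insert e Y)
  have h3 := (mem_closure_iff_rk hE hYE heE).not.mp he
  omega

lemma subset_closure_of_rk_le (hE : M.E.Finite) (hQE : Q ⊆ M.E) (hP : P ⊆ M.closure Q)
    (hrk : rk M Q ≤ rk M P) : Q ⊆ M.closure P := by
  intro q hq
  by_contra hqP
  have hPE : P ⊆ M.E := hP.trans (M.closure_subset_ground Q)
  have h1 : rk M (insert q P) = rk M P + 1 :=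
    rk_insert_of_not_mem_closure hE hPE (hQE hq) hqP
  have h2 : rk M (insert q P) ≤ rk M Q := by
    refine rk_le_of_subset_closure hE (insert_subset (M.subset_closure Q hQE hq) hP)
  omega

lemma rk_singleton_eq_zero (he : ¬ M.Indep {e}) : rk M {e} = 0 := by
    have : {n | ∃ I, M.Indep I ∧ I ⊆ ({e} : Set α) ∧ I.ncard = n} = {0} := by
      apply subset_antisymm
      · rintro n ⟨I, hI, hIe, rfl⟩
        rcases Set.subset_singleton_iff_eq.mp hIe with rfl | rfl
        · simp
        · exact absurd hI he
      · rintro n (rfl : n = 0)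
        exact ⟨∅, M.empty_indep, empty_subset _, by simp⟩
    rw [NDP.rk, this, csSup_singleton]

lemma loop_mem_closure (hE : M.E.Finite) (hYE : Y ⊆ M.E) (heE : e ∈ M.E)
    (he : ¬ M.Indep {e}) : e ∈ M.closure Y := by
  have h0 : rk M {e} = 0 := rk_singleton_eq_zero he
  rw [mem_closure_iff_rk hE hYE heE]
  have h1 := rk_union_le hE {e} Y
  have h2 := rk_mono (M := M) hE (subset_insert e Y)
  rw [Set.singleton_union, h0] at h1
  omega

lemma lambda_le_iff (M : Matroid α) (S : Set α) (k : ℕ) :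
    lambda M S ≤ (k : ℤ) - 1 ↔ rk M S + rk M (M.E \ S) + 1 ≤ rk M M.E + k := by
  unfold lambda; omega


section Contract

lemma contract_ground (M : Matroid α) (x : α) :
    (NDP.contract M {x}).E = M.E \ {x} := rfl

lemma contract_indep_iff (hE : M.E.Finite) (hxi : M.Indep {x}) (hI : I ⊆ M.E \ {x}) :
    (NDP.contract M {x}).Indep I ↔ M.Indep (insert x I) := by
  have hxE : x ∈ M.E := hxi.subset_ground rfl
  have hIE : I ⊆ M.E := hI.trans diff_subset
  have hxI : x ∉ I := fun h => (hI h).2 rfl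
  have hrw : (NDP.contract M {x}).Indep I ↔
      I ⊆ M.E \ {x} ∧ ∃ B, (M✶ ↾ (M.E \ {x})).IsBase B ∧ Disjoint I B :=
    dual_indep_iff_exists'
  rw [hrw]
  constructor
  · rintro ⟨hIR, B, hB, hdisj⟩
    rw [isBase_restrict_iff'] at hB
    have hBR : B ⊆ M.E \ {x} := hB.subset
    have hBE : B ⊆ M.E := hBR.trans diff_subset
    have hxB : x ∉ B := fun h => (hBR h).2 rfl
    have hmax : ∀ e, e ∈ M.E → e ≠ x → e ∉ B → M.Spanning ((M.E \ B) \ {e}) → False := by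
      intro e heE hex heB hsp
      have hset : (M.E \ B) \ {e} = M.E \ insert e B := by
        rw [Set.diff_diff, Set.union_singleton]
      have hein : M✶.Indep (insert e B) ∧ insert e B ⊆ M.E \ {x} := by
        refine ⟨?_, insert_subset ⟨heE, hex⟩ hBR⟩
        rw [← coindep_def, coindep_iff_compl_spanning (insert_subset heE hBE), ← hset]
        exact hsp
      have := hB.2 hein (subset_insert e B)
      exact heB (this (mem_insert e B))
    have hSspan : M.Spanning (M.E \ B) := by
      rw [← coindep_iff_compl_spanning hBE]
      exact coindep_def.mpr hB.indep
    by_cases hsx : M.Spanning ((M.E \ B) \ {x})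
    · exfalso
      obtain ⟨B₀, hB₀, hB₀sub⟩ := hsx.exists_isBase_subset
      have hxB₀ : x ∉ B₀ := fun h => (hB₀sub h).2 rfl
      have hB₀E : B₀ ⊆ M.E := hB₀.subset_ground
      obtain ⟨J, hJ, hxJ⟩ := hxi.subset_isBasis_of_subset
        (singleton_subset_iff.mpr (mem_insert x B₀)) (insert_subset hxE hB₀E)
      have hxJ' : x ∈ J := hxJ rfl
      have hJbase : M.IsBase J := by
        refine hJ.indep.isBase_of_spanning ?_
        have hsp2 : M.Spanning (insert x B₀) :=
          hB₀.spanning.superset (subset_insert _ _) (insert_subset hxE hB₀E)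
        rw [spanning_iff_closure_eq hJ.indep.subset_ground, hJ.closure_eq_closure]
        exact hsp2.closure_eq
      by_cases hBJ : B₀ ⊆ J
      · have hJeq : J = insert x B₀ :=
          subset_antisymm hJ.subset (insert_subset hxJ' hBJ)
        have := hB₀.eq_of_subset_indep hJbase.indep (hJeq ▸ hBJ)
        rw [← this] at hxJ'
        rw [hJeq] at this
        exact hxB₀ (this ▸ mem_insert x B₀)
      · obtain ⟨e, heB₀, heJ⟩ := not_subset.mp hBJ
        have hex : e ≠ x := fun h => hxB₀ (h ▸ heB₀)
        have heB : e ∉ B := (hB₀sub heB₀).1.2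
        have hJsub : J ⊆ (M.E \ B) \ {e} := by
          intro i hiJ
          rcases hJ.subset hiJ with rfl | hiB₀
          · exact ⟨⟨hxE, hxB⟩, fun h => hex (Set.mem_singleton_iff.mp h).symm⟩
          · exact ⟨(hB₀sub hiB₀).1, fun h => heJ (by rw [← Set.mem_singleton_iff.mp h]; exact hiJ)⟩
        have hsp3 : M.Spanning ((M.E \ B) \ {e}) :=
          hJbase.spanning_of_superset hJsub (diff_subset.trans diff_subset)
        exact hmax e (hB₀E heB₀) hex heB hsp3
    · have hSind : M.Indep (M.E \ B) := by
        rw [indep_iff_forall_notMem_closure_sdiff diff_subset]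
        intro e he hecl
        have hspe : M.Spanning ((M.E \ B) \ {e}) := by
          rw [spanning_iff_closure_eq (diff_subset.trans diff_subset),
            closure_diff_singleton_eq_closure hecl]
          exact hSspan.closure_eq
        by_cases hex : e = x
        · exact hsx (hex ▸ hspe)
        · exact hmax e he.1 hex he.2 hspe
      refine hSind.subset (insert_subset ⟨hxE, hxB⟩ fun i hi => ⟨hIE hi, ?_⟩)
      exact fun hiB => (hdisj.ne_of_mem hi hiB) rfl
  · intro h
    obtain ⟨B₀, hB₀, hsub⟩ := h.exists_isBase_superset
    have hB₀E : B₀ ⊆ M.E := hB₀.subset_ground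
    have hxB₀ : x ∈ B₀ := hsub (mem_insert _ _)
    have hIB₀ : I ⊆ B₀ := (subset_insert x I).trans hsub
    refine ⟨hI, M.E \ B₀, ?_, ?_⟩
    · rw [isBase_restrict_iff']
      refine ⟨⟨?_, ?_⟩, ?_⟩
      · rw [← coindep_def, coindep_iff_compl_spanning diff_subset,
          Set.diff_diff_cancel_left hB₀E]
        exact hB₀.spanning
      · exact fun i hi => ⟨hi.1, fun hix => (Set.mem_singleton_iff.mp hix ▸ hi).2 hxB₀⟩
      · rintro J ⟨hJind, hJR⟩ hBJ e heJ
        by_contra heB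
        have heE : e ∈ M.E := (hJR heJ).1
        have heB₀ : e ∈ B₀ := by
          by_contra h'
          exact heB ⟨heE, h'⟩
        have hex : e ≠ x := (hJR heJ).2
        have hsp : M.Spanning (M.E \ J) := by
          rw [← coindep_iff_compl_spanning (hJR.trans diff_subset)]
          exact coindep_def.mpr hJind
        have hsub2 : M.E \ J ⊆ B₀ \ {e} := by
          intro i hi
          have hiB₀ : i ∈ B₀ := by
            by_contra h'
            exact hi.2 (hBJ ⟨hi.1, h'⟩)
          exact ⟨hiB₀, fun h => hi.2 (by rw [Set.mem_singleton_iff.mp h]; exact heJ)⟩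
        have hsp2 : M.Spanning (B₀ \ {e}) :=
          hsp.superset hsub2 (diff_subset.trans hB₀E)
        have hecl : e ∈ M.closure (B₀ \ {e}) := by
          rw [hsp2.closure_eq]
          exact heE
        exact hB₀.indep.notMem_closure_sdiff_of_mem heB₀ hecl
    · exact Set.disjoint_left.mpr fun i hi h' => h'.2 (hIB₀ hi)

lemma contract_rk (hE : M.E.Finite) (hxi : M.Indep {x}) (hY : Y ⊆ M.E \ {x}) :
    rk (NDP.contract M {x}) Y + 1 = rk M (insert x Y) := by
  have hxE : x ∈ M.E := hxi.subset_ground rfl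
  have hYE : Y ⊆ M.E := hY.trans diff_subset
  obtain ⟨K, hK, hxK⟩ := hxi.subset_isBasis'_of_subset
    (singleton_subset_iff.mpr (mem_insert x Y))
  have hxK' : x ∈ K := hxK rfl
  have hKfin : K.Finite := indep_finite hE hK.indep
  have h1 : rk M (insert x Y) = K.ncard := basis'_ncard hE hK
  have hKY : K \ {x} ⊆ Y := by
    intro i hi
    rcases hK.subset hi.1 with h | h
    · exact absurd h hi.2
    · exact h
  have hKind : (NDP.contract M {x}).Indep (K \ {x}) := by
    rw [contract_indep_iff hE hxi (hKY.trans hY)]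
    rw [Set.insert_diff_singleton, Set.insert_eq_self.mpr hxK']
    exact hK.indep
  have h2 : (K \ {x}).ncard + 1 = K.ncard := by
    rw [Set.ncard_diff_singleton_add_one hxK' hKfin]
  have hge : (K \ {x}).ncard ≤ rk (NDP.contract M {x}) Y :=
    indep_ncard_le_rk (hE.diff (t := {x})) hKind hKY
  have hle : rk (NDP.contract M {x}) Y ≤ (K \ {x}).ncard := by
    refine csSup_le ⟨0, ∅, (NDP.contract M {x}).empty_indep, empty_subset _, by simp⟩ ?_
    rintro n ⟨J, hJ, hJY, rfl⟩
    have hJ' : M.Indep (insert x J) := (contract_indep_iff hE hxi (hJY.trans hY)).mp hJ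
    have hxJ : x ∉ J := fun h => (hY (hJY h)).2 rfl
    have := indep_ncard_le_rk hE hJ' (insert_subset_insert hJY)
    rw [h1] at this
    rw [Set.ncard_insert_of_notMem hxJ (indep_finite hE (hJ'.subset (subset_insert x J)))] at this
    omega
  omega

lemma contract_rk_le (hE : M.E.Finite) (hxi : M.Indep {x}) (hY : Y ⊆ M.E \ {x}) :
    rk (NDP.contract M {x}) Y ≤ rk M Y := by
  refine csSup_le ⟨0, ∅, (NDP.contract M {x}).empty_indep, empty_subset _, by simp⟩ ?_
  rintro n ⟨J, hJ, hJY, rfl⟩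
  have hJ' : M.Indep (insert x J) := (contract_indep_iff hE hxi (hJY.trans hY)).mp hJ
  exact indep_ncard_le_rk hE (hJ'.subset (subset_insert x J)) hJY

lemma contract_mem_closure_iff (hE : M.E.Finite) (hxi : M.Indep {x}) (hY : Y ⊆ M.E \ {x})
    (he : e ∈ M.E \ {x}) :
    e ∈ (NDP.contract M {x}).closure Y ↔ e ∈ M.closure (insert x Y) := by
  have hxE : x ∈ M.E := hxi.subset_ground rfl
  have hE' : (NDP.contract M {x}).E.Finite := by
    rw [contract_ground]; exact hE.diff (t := {x})
  rw [mem_closure_iff_rk hE' (show Y ⊆ (NDP.contract M {x}).E from hY)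
    (show e ∈ (NDP.contract M {x}).E from he)]
  rw [mem_closure_iff_rk hE (insert_subset hxE (hY.trans diff_subset)) he.1]
  have h1 := contract_rk hE hxi (insert_subset he hY)
  have h2 := contract_rk hE hxi hY
  rw [Set.insert_comm] at h1
  omega

lemma restrict_rk (M' : Matroid α) {X Y : Set α} (hYX : Y ⊆ X) :
    rk (M' ↾ X) Y = rk M' Y := by
  unfold NDP.rk
  congr 1
  ext n
  constructor
  · rintro ⟨J, hJ, hJY, rfl⟩
    exact ⟨J, (restrict_indep_iff.mp hJ).1, hJY, rfl⟩
  · rintro ⟨J, hJ, hJY, rfl⟩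
    exact ⟨J, restrict_indep_iff.mpr ⟨hJ, hJY.trans hYX⟩, hJY, rfl⟩

lemma not_sep (hM : NDP.ThreeConnected M) (k : ℕ) (hk : k < 3) (hS : S ⊆ M.E)
    (hl : rk M S + rk M (M.E \ S) + 1 ≤ rk M M.E + k)
    (h1 : k ≤ S.ncard) (h2 : k ≤ (M.E \ S).ncard) : False :=
  hM k hk S ⟨hS, (lambda_le_iff M S k).mpr hl, h1, h2⟩

lemma key {C Z W : Set α} (hE : M.E.Finite) (hM : NDP.ThreeConnected M)
    (hxE : x ∈ M.E) (hxi : M.Indep {x})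
    (hxCflat : x ∉ M.closure (M.E \ C))
    (hZWu : Z ∪ W = M.E \ {x}) (hZWd : Disjoint Z W)
    (hrZ : 2 ≤ rk (NDP.contract M {x}) Z) (hrW : 2 ≤ rk (NDP.contract M {x}) W)
    (hexact : rk (NDP.contract M {x}) Z + rk (NDP.contract M {x}) W
      = rk (NDP.contract M {x}) (M.E \ {x}) + 1)
    (hCZ : C \ {x} ⊆ (NDP.contract M {x}).closure Z) : False := by
  have hE' : (NDP.contract M {x}).E.Finite := by rw [contract_ground]; exact hE.diff (t := {x})
  have hZE' : Z ⊆ M.E \ {x} := hZWu ▸ subset_union_left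
  have hWE' : W ⊆ M.E \ {x} := hZWu ▸ subset_union_right
  have hZE : Z ⊆ M.E := hZE'.trans diff_subset
  have hWE : W ⊆ M.E := hWE'.trans diff_subset
  set B' := W \ C with hB'def
  set A' := Z ∪ (W ∩ C) with hA'def
  have hB'E' : B' ⊆ M.E \ {x} := diff_subset.trans hWE'
  have hA'E' : A' ⊆ M.E \ {x} := union_subset hZE' (inter_subset_left.trans hWE')
  have hA'cl : A' ⊆ (NDP.contract M {x}).closure Z := by
    refine union_subset ((NDP.contract M {x}).subset_closure Z hZE') ?_
    rintro i ⟨hiW, hiC⟩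
    exact hCZ ⟨hiC, fun h => (hWE' hiW).2 h⟩
  have hrA' : rk (NDP.contract M {x}) A' ≤ rk (NDP.contract M {x}) Z :=
    rk_le_of_subset_closure hE' hA'cl
  have hxB' : x ∉ M.closure B' := by
    intro h
    refine hxCflat (M.closure_subset_closure (show B' ⊆ M.E \ C from ?_) h)
    exact fun i hi => ⟨(hWE' hi.1).1, hi.2⟩
  have hrB'M : rk M B' = rk (NDP.contract M {x}) B' := by
    have h1 := contract_rk hE hxi hB'E'
    have h2 := rk_insert_of_not_mem_closure hE (hB'E'.trans diff_subset) hxE hxB'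
    omega
  have hEi : M.E = insert x (Z ∪ W) := by
    rw [hZWu, Set.insert_diff_singleton, Set.insert_eq_self.mpr hxE]
  have hxW : x ∉ W := fun h => (hWE' h).2 rfl
  have hxZ : x ∉ Z := fun h => (hZE' h).2 rfl
  have hEsplit : M.E \ B' = A' ∪ {x} := by
    ext i
    constructor
    · rintro ⟨hiE, hiB'⟩
      rw [hEi] at hiE
      rcases hiE with rfl | hiZW
      · exact Or.inr rfl
      rcases hiZW with hiZ | hiW
      · exact Or.inl (Or.inl hiZ)
      · refine Or.inl (Or.inr ⟨hiW, ?_⟩)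
        by_contra hiC
        exact hiB' ⟨hiW, hiC⟩
    · rintro (h | h)
      · rcases h with hiZ | hiWC
        · exact ⟨hZE hiZ, fun hb => (hZWd.ne_of_mem hiZ hb.1) rfl⟩
        · exact ⟨hWE hiWC.1, fun hb => hb.2 hiWC.2⟩
      · rw [Set.mem_singleton_iff.mp h]
        exact ⟨hxE, fun hb => hxW hb.1⟩
  have hA'x : rk M (A' ∪ {x}) = rk (NDP.contract M {x}) A' + 1 := by
    rw [Set.union_singleton]
    exact (contract_rk hE hxi hA'E').symm
  have hrkE : rk M M.E = rk (NDP.contract M {x}) (M.E \ {x}) + 1 := by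
    have h := contract_rk hE hxi (subset_refl (M.E \ {x}))
    rw [Set.insert_diff_singleton, Set.insert_eq_self.mpr hxE] at h
    omega
  have hB'fin : B'.Finite := hE.subset (hB'E'.trans diff_subset)
  have hZcard : 2 ≤ Z.ncard := le_trans hrZ (rk_le_ncard hE' (hE.subset hZE))
  have hA'xfin : (A' ∪ {x}).Finite := hE.subset (by rw [← hEsplit]; exact diff_subset)
  rcases Nat.lt_or_ge B'.ncard 2 with hlt | hge
  · rcases Nat.lt_or_ge B'.ncard 1 with h0 | h1
    · have hB'e : B' = ∅ := (Set.ncard_eq_zero hB'fin).mp (by omega)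
      have hWcl : W ⊆ (NDP.contract M {x}).closure Z := by
        intro i hi
        have hiC : i ∈ C := by
          by_contra h
          have : i ∈ B' := ⟨hi, h⟩
          rw [hB'e] at this
          exact this
        exact hCZ ⟨hiC, fun h => (hWE' hi).2 h⟩
      have hle : rk (NDP.contract M {x}) (M.E \ {x}) ≤ rk (NDP.contract M {x}) Z := by
        rw [← hZWu]
        exact rk_le_of_subset_closure hE'
          (union_subset ((NDP.contract M {x}).subset_closure Z hZE') hWcl)
      omega
    · have hrkB'1 : rk M B' ≤ 1 := le_trans (rk_le_ncard hE hB'fin) (by omega)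
      refine not_sep hM 1 (by norm_num) (hB'E'.trans diff_subset) ?_ (by omega) ?_
      · rw [hEsplit, hA'x, hrkE]
        omega
      · rw [hEsplit]
        refine le_trans ?_ (Set.ncard_le_ncard (subset_union_right) hA'xfin)
        simp
  · refine not_sep hM 2 (by norm_num) (hB'E'.trans diff_subset) ?_ hge ?_
    · rw [hEsplit, hA'x, hrkE]
      have hmono : rk (NDP.contract M {x}) B' ≤ rk (NDP.contract M {x}) W :=
        rk_mono hE' diff_subset
      omega
    · rw [hEsplit]
      refine le_trans hZcard (Set.ncard_le_ncard ?_ hA'xfin)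
      exact (subset_union_left (t := W ∩ C)).trans subset_union_left

end Contract



theorem statement_9' {α : Type*} (M : Matroid α) (hE : M.E.Finite) (hM : NDP.ThreeConnected M)
    (C : Set α) (hC : NDP.Cocircuit M C) (hr : NDP.rk M C = 3)
    (x : α) (hx : x ∈ C)
    (hT : ∃ T ⊆ M.closure C \ {x}, NDP.Circuit (NDP.contract M {x}) T ∧ T.ncard = 3) :
    NDP.SiThreeConnected (NDP.contract M {x}) := by
  classical
  have hCE : C ⊆ M.E := hC.1
  have hxE : x ∈ M.E := hCE hx
  have hCfin : C.Finite := hE.subset hCE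
  -- |C| ≥ 3
  have hCcard : 3 ≤ C.ncard := by
    obtain ⟨IC, hIC, hICcard⟩ := exists_basis'_rk hE (M := M) C
    have h1 := Set.ncard_le_ncard hIC.subset hCfin
    rw [hr] at hICcard
    omega
  have hCxne : (C \ {x}).Nonempty := by
    rw [Set.nonempty_iff_ne_empty]
    intro h
    have h1 : C ⊆ {x} := by
      intro i hi
      by_contra hix
      exact absurd (show i ∈ C \ {x} from ⟨hi, hix⟩) (by rw [h]; exact fun hh => hh)
    have := Set.ncard_le_ncard h1 (Set.finite_singleton x)
    simp at this
    omega
  have hExne : (M.E \ {x}).Nonempty := hCxne.mono (diff_subset_diff_left hCE)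
  have hExcard1 : 1 ≤ (M.E \ {x}).ncard := (Set.ncard_pos (hE.diff (t := {x}))).mpr hExne
  -- x is a nonloop
  have hxi : M.Indep {x} := by
    by_contra hxl
    have h0 : rk M {x} = 0 := rk_singleton_eq_zero hxl
    have h9 := rk_superadd hE (singleton_subset_iff.mpr hxE)
    have h10 : rk M (M.E \ {x}) ≤ rk M M.E := rk_mono hE diff_subset
    refine not_sep hM 1 (by norm_num) (singleton_subset_iff.mpr hxE) (by omega) (by simp) hExcard1
  -- cocircuit complement is closed
  have hxCflat : x ∉ M.closure (M.E \ C) := by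
    intro hmem
    have h1 : M✶.Indep (C \ {x}) := hC.2.2 x hx
    have hsp : M.Spanning (M.E \ (C \ {x})) := by
      rw [← coindep_iff_compl_spanning (diff_subset.trans hCE)]
      exact coindep_def.mpr h1
    have hset : M.E \ (C \ {x}) = insert x (M.E \ C) := by
      ext i
      constructor
      · rintro ⟨hiE, hi⟩
        by_cases hix : i = x
        · exact Or.inl hix
        · exact Or.inr ⟨hiE, fun hiC => hi ⟨hiC, hix⟩⟩
      · rintro (rfl | ⟨hiE, hiC⟩)
        · exact ⟨hxE, fun h => h.2 rfl⟩
        · exact ⟨hiE, fun h => hiC h.1⟩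
    rw [hset] at hsp
    have hcl : M.closure (insert x (M.E \ C)) = M.closure (M.E \ C) :=
      closure_insert_eq_of_mem_closure hmem
    have hspan2 : M.Spanning (M.E \ C) := by
      rw [spanning_iff_closure_eq diff_subset, ← hcl]
      exact hsp.closure_eq
    exact hC.2.1 (coindep_def.mp ((coindep_iff_compl_spanning hCE).mpr hspan2))
  have hE'fin : (NDP.contract M {x}).E.Finite := by rw [contract_ground]; exact hE.diff (t := {x})
  have hrkE : rk M M.E = rk (NDP.contract M {x}) (M.E \ {x}) + 1 := by
    have h := contract_rk hE hxi (subset_refl (M.E \ {x}))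
    rw [Set.insert_diff_singleton, Set.insert_eq_self.mpr hxE] at h
    omega
  have hCins : insert x (C \ {x}) = C := by
    rw [Set.insert_diff_singleton, Set.insert_eq_self.mpr hx]
  have hCxE' : C \ {x} ⊆ M.E \ {x} := diff_subset_diff_left hCE
  -- simplification setup
  intro N hsimp
  obtain ⟨X, hXE, rfl, hXind, hXpar, hXrep⟩ := hsimp
  have hXE' : X ⊆ M.E \ {x} := hXE
  have hXfin : X.Finite := (hE.diff (t := {x})).subset hXE'
  intro k hk S hsep
  obtain ⟨hSX, hlam, hkS, hkSc⟩ := hsep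
  have hSX' : S ⊆ X := hSX
  have hSfin : S.Finite := hXfin.subset hSX'
  have hSE' : S ⊆ M.E \ {x} := hSX'.trans hXE'
  have hlam' : rk ((NDP.contract M {x}) ↾ X) S + rk ((NDP.contract M {x}) ↾ X) (X \ S) + 1
      ≤ rk ((NDP.contract M {x}) ↾ X) X + k :=
    (lambda_le_iff ((NDP.contract M {x}) ↾ X) S k).mp hlam
  rw [restrict_rk _ hSX', restrict_rk _ diff_subset, restrict_rk _ subset_rfl] at hlam'
  -- X is spanning in the contraction
  have hspanX : rk (NDP.contract M {x}) X = rk (NDP.contract M {x}) (M.E \ {x}) := by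
    refine le_antisymm (rk_mono hE'fin hXE') (rk_le_of_subset_closure hE'fin ?_)
    intro e heE'
    by_cases hel : (NDP.contract M {x}).Indep {e}
    · obtain ⟨f, hfX, hef⟩ := hXrep e heE' hel
      exact (NDP.contract M {x}).closure_subset_closure (singleton_subset_iff.mpr hfX) hef
    · exact loop_mem_closure hE'fin hXE' heE' hel
  rw [hspanX] at hlam'
  -- nonloop and pair rank facts
  have hone : ∀ P, P ⊆ X → 1 ≤ P.ncard → 1 ≤ rk (NDP.contract M {x}) P := by
    intro P hPX h1
    obtain ⟨u, hu⟩ := Set.nonempty_of_ncard_ne_zero (show P.ncard ≠ 0 by omega)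
    have := indep_ncard_le_rk hE'fin (hXind u (hPX hu)) (singleton_subset_iff.mpr hu)
    simpa using this
  have hpairS : ∀ P, P ⊆ X → 2 ≤ P.ncard → 2 ≤ rk (NDP.contract M {x}) P := by
    intro P hPX h2
    have hPfin : P.Finite := hXfin.subset hPX
    obtain ⟨u, hu, v, hv, huv⟩ := (Set.one_lt_ncard hPfin).mp (by omega)
    have hvi := hXind v (hPX hv)
    have hindep : (NDP.contract M {x}).Indep {u, v} := by
      rw [show ({u, v} : Set α) = insert u {v} from rfl,
        hvi.insert_indep_iff_of_notMem (by simpa using huv)]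
      refine ⟨hXE' (hPX hu), fun h => huv (hXpar u v (hPX hu) (hPX hv) h)⟩
    have := indep_ncard_le_rk hE'fin hindep
      (insert_subset hu (singleton_subset_iff.mpr hv))
    rwa [Set.ncard_pair huv] at this
  -- the closure side construction
  have hAE' : (NDP.contract M {x}).closure S ⊆ M.E \ {x} :=
    (NDP.contract M {x}).closure_subset_ground S
  set A := (NDP.contract M {x}).closure S with hAdef
  set B := (M.E \ {x}) \ A with hBdef
  have hSA : S ⊆ A := (NDP.contract M {x}).subset_closure S hSE'
  have haS : rk (NDP.contract M {x}) A = rk (NDP.contract M {x}) S := rk_closure hE'fin S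
  have hBE' : B ⊆ M.E \ {x} := diff_subset.trans (subset_refl _)
  have hBloop : ∀ e ∈ B, (NDP.contract M {x}).Indep {e} := by
    intro e heB
    by_contra hel
    exact heB.2 (loop_mem_closure hE'fin hSE' heB.1 hel)
  have hBclc : B ⊆ (NDP.contract M {x}).closure (X \ S) := by
    intro e heB
    obtain ⟨f, hfX, hef⟩ := hXrep e heB.1 (hBloop e heB)
    have hfS : f ∉ S := by
      intro hfS
      exact heB.2 ((NDP.contract M {x}).closure_subset_closure
        (singleton_subset_iff.mpr hfS) hef)
    exact (NDP.contract M {x}).closure_subset_closure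
      (show {f} ⊆ X \ S from singleton_subset_iff.mpr ⟨hfX, hfS⟩) hef
  have hrB_le : rk (NDP.contract M {x}) B ≤ rk (NDP.contract M {x}) (X \ S) :=
    rk_le_of_subset_closure hE'fin hBclc
  have hABu : A ∪ B = M.E \ {x} := Set.union_diff_cancel hAE'
  have hABd : Disjoint A B := Set.disjoint_sdiff_right
  have hxA : x ∉ A := fun h => (hAE' h).2 rfl
  have hxB : x ∉ B := fun h => (hBE' h).2 rfl
  have hcomplA : M.E \ A = insert x B := by
    ext i
    constructor
    · rintro ⟨hiE, hiA⟩
      by_cases hix : i = x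
      · exact Or.inl hix
      · exact Or.inr ⟨⟨hiE, hix⟩, hiA⟩
    · rintro (rfl | hiB)
      · exact ⟨hxE, hxA⟩
      · exact ⟨(hBE' hiB).1, hiB.2⟩
  have hcomplB : M.E \ B = insert x A := by
    ext i
    constructor
    · rintro ⟨hiE, hiB⟩
      by_cases hix : i = x
      · exact Or.inl hix
      · refine Or.inr ?_
        by_contra hiA
        exact hiB ⟨⟨hiE, hix⟩, hiA⟩
    · rintro (rfl | hiA)
      · exact ⟨hxE, hxB⟩
      · exact ⟨(hAE' hiA).1, fun h => h.2 hiA⟩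
  have hrkAx : rk M (insert x A) = rk (NDP.contract M {x}) A + 1 :=
    (contract_rk hE hxi hAE').symm
  have hrkBx : rk M (insert x B) = rk (NDP.contract M {x}) B + 1 :=
    (contract_rk hE hxi hBE').symm
  have hrkMA_cases : rk M A = rk (NDP.contract M {x}) A
      ∨ rk M A = rk (NDP.contract M {x}) A + 1 := by
    have hle : rk M A ≤ rk M (insert x A) := rk_mono hE (subset_insert x A)
    have hge := contract_rk_le hE hxi hAE'
    omega
  have hrkMB_cases : rk M B = rk (NDP.contract M {x}) B
      ∨ rk M B = rk (NDP.contract M {x}) B + 1 := by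
    have hle : rk M B ≤ rk M (insert x B) := rk_mono hE (subset_insert x B)
    have hge := contract_rk_le hE hxi hBE'
    omega
  have hAfin : A.Finite := (hE.diff (t := {x})).subset hAE'
  have hBfin : B.Finite := (hE.diff (t := {x})).subset hBE'
  have hAE : A ⊆ M.E := hAE'.trans diff_subset
  have hBE : B ⊆ M.E := hBE'.trans diff_subset
  have hixAfin : (insert x A).Finite := hAfin.insert x
  have hixBfin : (insert x B).Finite := hBfin.insert x
  interval_cases k
  · -- k = 0
    have hsup := rk_superadd (M := (NDP.contract M {x}) ↾ X) (hXfin) hSX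
    rw [show ((NDP.contract M {x}) ↾ X).E = X from rfl] at hsup
    rw [restrict_rk _ hSX', restrict_rk _ diff_subset, restrict_rk _ subset_rfl] at hsup
    rw [hspanX] at hsup
    omega
  · -- k = 1
    have h1S : 1 ≤ rk (NDP.contract M {x}) S := hone S hSX' hkS
    have h1Sc : 1 ≤ rk (NDP.contract M {x}) (X \ S) := hone _ diff_subset hkSc
    have hSne : S.Nonempty := Set.nonempty_of_ncard_ne_zero (show S.ncard ≠ 0 by omega)
    obtain ⟨s, hs⟩ := hSne
    have hsx : s ≠ x := fun h => (hSE' hs).2 h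
    have hBne : B.Nonempty := by
      rw [Set.nonempty_iff_ne_empty]
      intro hBe
      rw [hBe, union_empty] at hABu
      rw [← hABu, haS] at hlam'
      have := rk_mono (M := NDP.contract M {x}) hE'fin
        (show X \ S ⊆ M.E \ {x} from diff_subset.trans hXE')
      omega
    obtain ⟨b0, hb0⟩ := hBne
    have hb0x : b0 ≠ x := fun h => (hBE' hb0).2 h
    have hcardA1 : 1 ≤ A.ncard := (Set.ncard_pos hAfin).mpr ⟨s, hSA hs⟩
    have hcardEA : 1 ≤ (M.E \ A).ncard := by
      rw [hcomplA]
      exact (Set.ncard_pos hixBfin).mpr ⟨x, Or.inl rfl⟩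
    have hcardB1 : 1 ≤ B.ncard := (Set.ncard_pos hBfin).mpr ⟨b0, hb0⟩
    have hcardEB : 1 ≤ (M.E \ B).ncard := by
      rw [hcomplB]
      exact (Set.ncard_pos hixAfin).mpr ⟨x, Or.inl rfl⟩
    rcases hrkMA_cases with hA' | hA'
    · refine not_sep hM 1 (by norm_num) hAE ?_ hcardA1 hcardEA
      rw [hcomplA, hrkBx, hrkE, hA', haS]
      omega
    rcases hrkMB_cases with hB' | hB'
    · refine not_sep hM 1 (by norm_num) hBE ?_ hcardB1 hcardEB
      rw [hcomplB, hrkAx, hrkE, hB', haS]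
      omega
    by_cases hA2 : 2 ≤ A.ncard
    · refine not_sep hM 2 (by norm_num) hAE ?_ hA2 ?_
      · rw [hcomplA, hrkBx, hrkE, hA', haS]
        omega
      · rw [hcomplA]
        calc 2 = ({b0, x} : Set α).ncard := (Set.ncard_pair hb0x).symm
          _ ≤ (insert x B).ncard := Set.ncard_le_ncard
              (by rintro i (rfl | rfl) <;> [exact Or.inr hb0; exact Or.inl rfl]) hixBfin
    by_cases hB2 : 2 ≤ B.ncard
    · refine not_sep hM 2 (by norm_num) hBE ?_ hB2 ?_
      · rw [hcomplB, hrkAx, hrkE, hB', haS]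
        omega
      · rw [hcomplB]
        calc 2 = ({s, x} : Set α).ncard := (Set.ncard_pair hsx).symm
          _ ≤ (insert x A).ncard := Set.ncard_le_ncard
              (by rintro i (rfl | rfl) <;> [exact Or.inr (hSA hs); exact Or.inl rfl]) hixAfin
    · -- tiny case: |E| ≤ 3
      have hE'card : (M.E \ {x}).ncard ≤ 2 := by
        rw [← hABu]
        have := Set.ncard_union_le A B
        omega
      have hEcard : M.E.ncard ≤ 3 := by
        have h1 : M.E.ncard ≤ (M.E \ {x}).ncard + 1 := by
          rw [Set.ncard_diff_singleton_add_one hxE hE]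
        omega
      have hCeqE : C = M.E := by
        apply Set.eq_of_subset_of_ncard_le hCE (by omega) hE
      have hrkME : rk M M.E = 3 := by
        have h1 : rk M M.E ≤ M.E.ncard := rk_le_ncard hE hE
        have h2 : rk M C ≤ rk M M.E := rk_mono hE hCE
        have h3 : C.ncard ≤ M.E.ncard := Set.ncard_le_ncard hCE hE
        rw [hCeqE] at hr
        omega
      have hEeq3 : M.E.ncard = 3 := by
        have h1 : rk M M.E ≤ M.E.ncard := rk_le_ncard hE hE
        omega
      have hrkx1 : rk M {x} = 1 := by
        rw [indep_rk hE hxi, Set.ncard_singleton]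
      have hrkEx : rk M (M.E \ {x}) ≤ 2 := le_trans (rk_le_ncard hE (hE.diff (t := {x}))) hE'card
      have hsup := rk_superadd hE (singleton_subset_iff.mpr hxE)
      refine not_sep hM 1 (by norm_num) (singleton_subset_iff.mpr hxE) ?_ (by simp) hExcard1
      omega
  · -- k = 2
    have h2S : 2 ≤ rk (NDP.contract M {x}) S := hpairS S hSX' hkS
    have h2Sc : 2 ≤ rk (NDP.contract M {x}) (X \ S) := hpairS _ diff_subset hkSc
    have hSne : S.Nonempty := Set.nonempty_of_ncard_ne_zero (show S.ncard ≠ 0 by omega)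
    obtain ⟨s, hs⟩ := hSne
    have hsx : s ≠ x := fun h => (hSE' hs).2 h
    have hcardA2 : 2 ≤ A.ncard := le_trans hkS (Set.ncard_le_ncard hSA hAfin)
    have hcardEB2 : 2 ≤ (M.E \ B).ncard := by
      rw [hcomplB]
      calc 2 = ({s, x} : Set α).ncard := (Set.ncard_pair hsx).symm
        _ ≤ (insert x A).ncard := Set.ncard_le_ncard
            (by rintro i (rfl | rfl) <;> [exact Or.inr (hSA hs); exact Or.inl rfl]) hixAfin
    by_cases hb2 : 2 ≤ rk (NDP.contract M {x}) B
    · -- main case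
      have hBcard2 : 2 ≤ B.ncard := le_trans hb2 (rk_le_ncard hE'fin hBfin)
      have hcardEA2 : 2 ≤ (M.E \ A).ncard := by
        rw [hcomplA]
        exact le_trans hBcard2 (Set.ncard_le_ncard (subset_insert x B) hixBfin)
      rcases hrkMA_cases with hA' | hA'
      · refine not_sep hM 2 (by norm_num) hAE ?_ hcardA2 hcardEA2
        rw [hcomplA, hrkBx, hrkE, hA']
        omega
      rcases hrkMB_cases with hB' | hB'
      · refine not_sep hM 2 (by norm_num) hBE ?_ hBcard2 hcardEB2
        rw [hcomplB, hrkAx, hrkE, hB']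
        omega
      have hexact : rk (NDP.contract M {x}) A + rk (NDP.contract M {x}) B
          = rk (NDP.contract M {x}) (M.E \ {x}) + 1 := by
        have hub : rk (NDP.contract M {x}) A + rk (NDP.contract M {x}) B
            ≤ rk (NDP.contract M {x}) (M.E \ {x}) + 1 := by
          rw [haS]
          omega
        by_contra hne
        refine not_sep hM 2 (by norm_num) hAE ?_ hcardA2 hcardEA2
        rw [hcomplA, hrkBx, hrkE, hA']
        omega
      -- triangle facts
      obtain ⟨T, hTsub, hTcirc, hTcard⟩ := hT
      have hTE' : T ⊆ M.E \ {x} := fun t ht =>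
        ⟨M.closure_subset_ground C (hTsub ht).1, (hTsub ht).2⟩
      have hTcl : ∀ t ∈ T, t ∈ (NDP.contract M {x}).closure (C \ {x}) := by
        intro t ht
        rw [contract_mem_closure_iff hE hxi hCxE' (hTE' ht), hCins]
        exact (hTsub ht).1
      have hrkCx : rk (NDP.contract M {x}) (C \ {x}) = 2 := by
        have h := contract_rk hE hxi hCxE'
        rw [hCins, hr] at h
        omega
      obtain ⟨t1, t2, t3, h12, h13, h23, hTeq⟩ := Set.ncard_eq_three.mp hTcard
      have ht1T : t1 ∈ T := by rw [hTeq]; exact Or.inl rfl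
      have ht2T : t2 ∈ T := by rw [hTeq]; exact Or.inr (Or.inl rfl)
      have ht3T : t3 ∈ T := by rw [hTeq]; exact Or.inr (Or.inr rfl)
      have hmem : ∀ t ∈ T, t ∈ A ∨ t ∈ B := fun t ht =>
        (em (t ∈ A)).imp id fun h => ⟨hTE' ht, h⟩
      obtain ⟨u, v, huv, huT, hvT, hside⟩ : ∃ u v, u ≠ v ∧ u ∈ T ∧ v ∈ T ∧
          ((u ∈ A ∧ v ∈ A) ∨ (u ∈ B ∧ v ∈ B)) := by
        rcases hmem t1 ht1T with h1 | h1 <;> rcases hmem t2 ht2T with h2 | h2 <;>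
          rcases hmem t3 ht3T with h3 | h3
        · exact ⟨t1, t2, h12, ht1T, ht2T, Or.inl ⟨h1, h2⟩⟩
        · exact ⟨t1, t2, h12, ht1T, ht2T, Or.inl ⟨h1, h2⟩⟩
        · exact ⟨t1, t3, h13, ht1T, ht3T, Or.inl ⟨h1, h3⟩⟩
        · exact ⟨t2, t3, h23, ht2T, ht3T, Or.inr ⟨h2, h3⟩⟩
        · exact ⟨t2, t3, h23, ht2T, ht3T, Or.inl ⟨h2, h3⟩⟩
        · exact ⟨t1, t3, h13, ht1T, ht3T, Or.inr ⟨h1, h3⟩⟩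
        · exact ⟨t1, t2, h12, ht1T, ht2T, Or.inr ⟨h1, h2⟩⟩
        · exact ⟨t1, t2, h12, ht1T, ht2T, Or.inr ⟨h1, h2⟩⟩
      have hTfin : T.Finite := (hE.diff (t := {x})).subset hTE'
      obtain ⟨w, hwT, hwuv⟩ : ∃ w ∈ T, w ∉ ({u, v} : Set α) := by
        refine Set.exists_mem_notMem_of_ncard_lt_ncard ?_ ((Set.finite_singleton v).insert u)
        rw [hTcard, Set.ncard_pair huv]
        omega
      have hpairind : (NDP.contract M {x}).Indep {u, v} := by
        refine (hTcirc.2.2 w hwT).subset ?_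
        rintro i (rfl | rfl)
        · exact ⟨huT, fun h => hwuv (by rw [Set.mem_singleton_iff.mp h]; exact Or.inl rfl)⟩
        · exact ⟨hvT, fun h => hwuv (by rw [Set.mem_singleton_iff.mp h]; exact Or.inr rfl)⟩
      have hCside : ∀ P, u ∈ P → v ∈ P → C \ {x} ⊆ (NDP.contract M {x}).closure P := by
        intro P hu hv
        have h2uv : rk (NDP.contract M {x}) {u, v} = 2 := by
          rw [indep_rk hE'fin hpairind, Set.ncard_pair huv]
        have hsub := subset_closure_of_rk_le hE'fin hCxE'
          (show ({u, v} : Set α) ⊆ (NDP.contract M {x}).closure (C \ {x}) by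
            intro i hi
            rcases hi with h | h
            · rw [h]; exact hTcl u huT
            · rw [Set.mem_singleton_iff.mp h]; exact hTcl v hvT)
          (by omega)
        refine hsub.trans ((NDP.contract M {x}).closure_subset_closure ?_)
        rintro i (rfl | rfl)
        · exact hu
        · exact hv
      rcases hside with ⟨hu, hv⟩ | ⟨hu, hv⟩
      · exact key hE hM hxE hxi hxCflat hABu hABd (by rw [haS]; omega) hb2 hexact
          (hCside A hu hv)
      · refine key hE hM hxE hxi hxCflat (by rw [union_comm]; exact hABu) hABd.symm hb2
          (by rw [haS]; omega) (by omega) (hCside B hu hv)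
    · -- degenerate case
      by_cases hBe : B = ∅
      · rw [hBe, union_empty] at hABu
        rw [← hABu, haS] at hlam'
        have := rk_mono (M := NDP.contract M {x}) hE'fin
          (show X \ S ⊆ M.E \ {x} from diff_subset.trans hXE')
        omega
      · obtain ⟨b0, hb0⟩ := Set.nonempty_iff_ne_empty.mpr hBe
        have hb1 : rk (NDP.contract M {x}) B = 1 := by
          have h1 := indep_ncard_le_rk hE'fin (hBloop b0 hb0) (singleton_subset_iff.mpr hb0)
          simp only [Set.ncard_singleton] at h1
          omega
        have hra1 : rk (NDP.contract M {x}) (M.E \ {x}) = rk (NDP.contract M {x}) S + 1 := by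
          have hle : rk (NDP.contract M {x}) (M.E \ {x})
              ≤ rk (NDP.contract M {x}) S + 1 := by
            have h1 := rk_union_le hE'fin A B
            rw [hABu, haS, hb1] at h1
            exact h1
          have hge : rk (NDP.contract M {x}) S ≤ rk (NDP.contract M {x}) (M.E \ {x}) :=
            rk_mono hE'fin hSE'
          have hne : rk (NDP.contract M {x}) (M.E \ {x}) ≠ rk (NDP.contract M {x}) S := by
            intro heq
            have hb0cl : b0 ∉ (NDP.contract M {x}).closure S := hb0.2
            have h2 := rk_insert_of_not_mem_closure hE'fin
              (show S ⊆ (NDP.contract M {x}).E from hSE')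
              (show b0 ∈ (NDP.contract M {x}).E from hBE' hb0) hb0cl
            have h3 : rk (NDP.contract M {x}) (insert b0 S)
                ≤ rk (NDP.contract M {x}) (M.E \ {x}) :=
              rk_mono hE'fin (insert_subset (hBE' hb0) hSE')
            omega
          omega
        rcases Nat.lt_or_ge B.ncard 2 with hlt | hge2
        · have hBcard1 : B.ncard = 1 := by
            have := (Set.ncard_pos hBfin).mpr ⟨b0, hb0⟩
            omega
          refine not_sep hM 1 (by norm_num) hBE ?_ (by omega) ?_
          · have h1 : rk M B ≤ 1 := le_trans (rk_le_ncard hE hBfin) (by omega)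
            rw [hcomplB, hrkAx, hrkE, hra1, haS]
            omega
          · rw [hcomplB]
            exact (Set.ncard_pos hixAfin).mpr ⟨x, Or.inl rfl⟩
        · refine not_sep hM 2 (by norm_num) hBE ?_ hge2 hcardEB2
          have h1 : rk M B ≤ rk M (insert x B) := rk_mono hE (subset_insert x B)
          rw [hcomplB, hrkAx, hrkE, hra1, haS]
          omega

end NDPProof

/-- If `C*` is a rank-3 cocircuit of a 3-connected matroid `M` and
`cl(C*) − {x}` contains a triangle of `M/x` for some `x ∈ C*`, then `si(M/x)` is
3-connected. -/
theorem statement_9 {α : Type*} (M : Matroid α) [M.Finite] (hM : NDP.ThreeConnected M)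
    (C : Set α) (hC : NDP.Cocircuit M C) (hr : NDP.rk M C = 3)
    (x : α) (hx : x ∈ C)
    (hT : ∃ T ⊆ M.closure C \ {x}, NDP.Circuit (NDP.contract M {x}) T ∧ T.ncard = 3) :
    NDP.SiThreeConnected (NDP.contract M {x}) := by
  exact NDPProof.statement_9' M M.ground_finite hM C hC hr x hx hT
end
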